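/- arXiv:1512.01068 — 2 statements merged into one kernel-verified Lean document; each statement's English description precedes it below -/
import Mathlib

section
/- Let m ≥ 2 be a natural number and let n ∈ ℕ be written in base m as n = Σ_{j=0}^r d_j m^j with digits d_j ∈ {0,...,m-1} and r = ⌊log_m n⌋. Then Σ_{j=0}^r d_j m^{j/2} ≤ (√m + 1)·√n. -/
/-!
Reading the base-`m` digits of `n` from the least significant one, the weighted digit sum `W n`
satisfies `W n = n % m + √m · W (n / m)`. This recursion preserves the sharper bound
`W n ≤ (√m + 1) (√(n + 1) - 1)`: with `X = √(n + 1)` and `Y = √m · √(n / m + 1)`, the step reduces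
to `(Y - X) (X + Y - √m - 1) ≥ 0`, which holds because `X ≤ Y`, `1 ≤ X` and `√m ≤ Y`.
Finally `√(n + 1) - 1 ≤ √n`.
-/

open Real

theorem sum_range_getD_mul_pow_eq_ofDigits {R : Type*} [CommSemiring R] (x : R) (L : List ℕ) :
    ∑ j ∈ Finset.range L.length, (L.getD j 0 : R) * x ^ j = Nat.ofDigits x L := by
  induction L with
  | nil => simp [Nat.ofDigits]
  | cons d L ih =>
    rw [List.length_cons, Finset.sum_range_succ', Nat.ofDigits, ← ih, Finset.mul_sum]
    simp only [List.getD_cons_succ, List.getD_cons_zero, pow_succ, pow_zero, mul_one]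
    rw [add_comm]
    exact congrArg _ (Finset.sum_congr rfl fun _ _ => by ring)

theorem mul_bound_add_digit_le {s q a : ℝ} (hs : 0 ≤ s) (hq : 0 ≤ q) (ha₀ : 0 ≤ a)
    (ha : a ≤ s ^ 2 - 1) :
    s * ((s + 1) * (√(q + 1) - 1)) + a ≤ (s + 1) * (√(s ^ 2 * q + a + 1) - 1) := by
  set X := √(s ^ 2 * q + a + 1)
  set Y := s * √(q + 1)
  have hX2 : X ^ 2 = s ^ 2 * q + a + 1 := sq_sqrt (by positivity)
  have hY2 : Y ^ 2 = s ^ 2 * q + s ^ 2 := by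
    rw [mul_pow, sq_sqrt (by positivity)]
    ring
  have hX_le_Y : X ≤ Y := (sqrt_le_left (by positivity)).2 (by linarith)
  have hone_le_X : 1 ≤ X := (le_sqrt zero_le_one (by positivity)).2 (by nlinarith)
  have hs_le_Y : s ≤ Y :=
    le_mul_of_one_le_right hs ((le_sqrt zero_le_one (by positivity)).2 (by linarith))
  have key : 0 ≤ (Y - X) * (X + Y - s - 1) := mul_nonneg (by linarith) (by linarith)
  nlinarith

theorem ofDigits_sqrt_digits_le {m : ℕ} (hm : 2 ≤ m) (n : ℕ) :
    Nat.ofDigits √m (Nat.digits m n) ≤ (√m + 1) * (√(n + 1) - 1) := by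
  induction n using Nat.strong_induction_on with
  | _ n ih =>
    rcases Nat.eq_zero_or_pos n with rfl | hn
    · simp [Nat.ofDigits]
    have hm' : 1 < m := hm
    have hsq : √(m : ℝ) ^ 2 = m := sq_sqrt (Nat.cast_nonneg m)
    have hdigit : ((n % m : ℕ) : ℝ) ≤ √m ^ 2 - 1 := by
      rw [hsq, le_sub_iff_add_le]
      exact_mod_cast Nat.mod_lt n (by omega)
    have hn_eq : (n : ℝ) = √m ^ 2 * (n / m : ℕ) + (n % m : ℕ) := by
      rw [hsq]
      exact_mod_cast (Nat.div_add_mod n m).symm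
    rw [Nat.digits_def' hm' hn, Nat.ofDigits, hn_eq, add_comm]
    calc √m * Nat.ofDigits √m (Nat.digits m (n / m)) + ((n % m : ℕ) : ℝ)
        ≤ √m * ((√m + 1) * (√((n / m : ℕ) + 1) - 1)) + ((n % m : ℕ) : ℝ) := by
          gcongr
          exact ih _ (Nat.div_lt_self hn hm')
      _ ≤ _ := mul_bound_add_digit_le (sqrt_nonneg _) (Nat.cast_nonneg _) (Nat.cast_nonneg _)
          hdigit

theorem sqrt_add_one_le {x : ℝ} (hx : 0 ≤ x) : √(x + 1) ≤ √x + 1 :=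
  (sqrt_le_left (by positivity)).2 (by nlinarith [sq_sqrt hx, sqrt_nonneg x])

/-- Weighted digit sum bound: if `n` has base-`m` digits `d_j`, then
`Σ_j d_j · m^{j/2} ≤ (√m + 1)·√n`. -/
theorem weighted_digit_sum_le (m n : ℕ) (hm : 2 ≤ m) :
    ∑ j ∈ Finset.range (Nat.digits m n).length,
      ((Nat.digits m n).getD j 0 : ℝ) * Real.sqrt m ^ j
      ≤ (Real.sqrt m + 1) * Real.sqrt n := by
  rw [sum_range_getD_mul_pow_eq_ofDigits]
  calc Nat.ofDigits √m (Nat.digits m n) ≤ (√m + 1) * (√(n + 1) - 1) :=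
        ofDigits_sqrt_digits_le hm n
    _ ≤ (√m + 1) * √n := by
        gcongr
        linarith [sqrt_add_one_le (Nat.cast_nonneg (n : ℕ))]
end

section
/- For k ∈ ℕ with k ≥ 1, let φ : 𝕋 → ℝ be defined by the absolutely convergent Fourier series φ(z) = Σ_{l≥1} 2(2πl)^{−2k} cos(2πl z). Then φ has zero mean over the torus, and for every smooth 1-periodic test function f, (−1)^k ∫_𝕋 f(z) φ^{(2k)}(z) dz = f(0) − ∫_𝕋 f(z) dz; that is, (−1)^k Δ^k φ = δ_0 − 1 in the distributional sense. -/
open intervalIntegral Real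
open MeasureTheory

section aux

lemma periodic_deriv_one {g : ℝ → ℝ} (hp : Function.Periodic g 1) :
    Function.Periodic (deriv g) 1 := by
  intro x
  have h : (fun y => g (y + 1)) = g := funext fun y => hp y
  calc deriv g (x + 1) = deriv (fun y => g (y + 1)) x := (deriv_comp_add_const g 1 x).symm
  _ = deriv g x := by rw [h]

variable {g : ℝ → ℝ} {c : ℝ}

lemma ibp_cos (hg : ContDiff ℝ (⊤ : ℕ∞) g) (hp : Function.Periodic g 1)
    (hc1 : Real.cos c = 1) :
    (∫ z in (0:ℝ)..1, deriv g z * Real.cos (c * z))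
      = c * ∫ z in (0:ℝ)..1, g z * Real.sin (c * z) := by
  have hgd : ∀ x ∈ Set.uIcc (0:ℝ) 1, HasDerivAt g (deriv g x) x :=
    fun x _ => (hg.differentiable (by simp) x).hasDerivAt
  have hvd : ∀ x ∈ Set.uIcc (0:ℝ) 1,
      HasDerivAt (fun x => Real.cos (c * x)) (-Real.sin (c * x) * c) x := by
    intro x _
    simpa using ((hasDerivAt_id x).const_mul c).cos
  have h := intervalIntegral.integral_mul_deriv_eq_deriv_mul hgd hvd
    ((hg.continuous_deriv (by exact_mod_cast le_top)).intervalIntegrable 0 1)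
    ((by continuity : Continuous fun x => -Real.sin (c * x) * c).intervalIntegrable 0 1)
  have h2 : (∫ z in (0:ℝ)..1, g z * (-Real.sin (c * z) * c))
      = (-c) * ∫ z in (0:ℝ)..1, g z * Real.sin (c * z) := by
    rw [← intervalIntegral.integral_const_mul]
    congr 1; ext z; ring
  have hg10 : g 1 = g 0 := by simpa using hp 0
  rw [h2, eq_sub_iff_add_eq] at h
  rw [mul_one, hc1, mul_zero, Real.cos_zero, hg10] at h
  linarith [h]

lemma ibp_sin (hg : ContDiff ℝ (⊤ : ℕ∞) g) (hp : Function.Periodic g 1)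
    (hc2 : Real.sin c = 0) :
    (∫ z in (0:ℝ)..1, deriv g z * Real.sin (c * z))
      = (-c) * ∫ z in (0:ℝ)..1, g z * Real.cos (c * z) := by
  have hgd : ∀ x ∈ Set.uIcc (0:ℝ) 1, HasDerivAt g (deriv g x) x :=
    fun x _ => (hg.differentiable (by simp) x).hasDerivAt
  have hvd : ∀ x ∈ Set.uIcc (0:ℝ) 1,
      HasDerivAt (fun x => Real.sin (c * x)) (Real.cos (c * x) * c) x := by
    intro x _
    simpa using ((hasDerivAt_id x).const_mul c).sin
  have h := intervalIntegral.integral_mul_deriv_eq_deriv_mul hgd hvd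
    ((hg.continuous_deriv (by exact_mod_cast le_top)).intervalIntegrable 0 1)
    ((by continuity : Continuous fun x => Real.cos (c * x) * c).intervalIntegrable 0 1)
  have h2 : (∫ z in (0:ℝ)..1, g z * (Real.cos (c * z) * c))
      = c * ∫ z in (0:ℝ)..1, g z * Real.cos (c * z) := by
    rw [← intervalIntegral.integral_const_mul]
    congr 1; ext z; ring
  have hg10 : g 1 = g 0 := by simpa using hp 0
  rw [h2, eq_sub_iff_add_eq] at h
  simp only [mul_one, mul_zero, hc2, Real.sin_zero] at h
  linarith [h]

end aux

section aux2
variable {g : ℝ → ℝ} {c : ℝ}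

lemma deriv_contDiff_top (hg : ContDiff ℝ (⊤ : ℕ∞) g) : ContDiff ℝ (⊤ : ℕ∞) (deriv g) :=
  (contDiff_infty_iff_deriv.mp hg).2

lemma ibp2_cos (hg : ContDiff ℝ (⊤ : ℕ∞) g) (hp : Function.Periodic g 1)
    (hc1 : Real.cos c = 1) (hc2 : Real.sin c = 0) :
    (∫ z in (0:ℝ)..1, deriv (deriv g) z * Real.cos (c * z))
      = -(c^2) * ∫ z in (0:ℝ)..1, g z * Real.cos (c * z) := by
  rw [ibp_cos (deriv_contDiff_top hg) (periodic_deriv_one hp) hc1,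
    ibp_sin hg hp hc2]
  ring

lemma ibp2_sin (hg : ContDiff ℝ (⊤ : ℕ∞) g) (hp : Function.Periodic g 1)
    (hc1 : Real.cos c = 1) (hc2 : Real.sin c = 0) :
    (∫ z in (0:ℝ)..1, deriv (deriv g) z * Real.sin (c * z))
      = -(c^2) * ∫ z in (0:ℝ)..1, g z * Real.sin (c * z) := by
  rw [ibp_sin (deriv_contDiff_top hg) (periodic_deriv_one hp) hc2,
    ibp_cos hg hp hc1]
  ring

lemma iter_cos (hc1 : Real.cos c = 1) (hc2 : Real.sin c = 0) (k : ℕ) :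
    ∀ g : ℝ → ℝ, ContDiff ℝ (⊤ : ℕ∞) g → Function.Periodic g 1 →
    (∫ z in (0:ℝ)..1, iteratedDeriv (2*k) g z * Real.cos (c * z))
      = (-1)^k * c^(2*k) * ∫ z in (0:ℝ)..1, g z * Real.cos (c * z) := by
  induction k with
  | zero => intro g hg hp; simp [iteratedDeriv_zero]
  | succ k ih =>
    intro g hg hp
    have h2 : 2 * (k+1) = (2*k) + 1 + 1 := by ring
    have hgg : iteratedDeriv (2*(k+1)) g = iteratedDeriv (2*k) (deriv (deriv g)) := by
      rw [h2, iteratedDeriv_succ', iteratedDeriv_succ']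
    rw [hgg, ih (deriv (deriv g)) (deriv_contDiff_top (deriv_contDiff_top hg))
      (periodic_deriv_one (periodic_deriv_one hp)),
      ibp2_cos hg hp hc1 hc2]
    ring

end aux2

/-- The Green's-function Fourier series `φ(z) = Σ_{l≥1} 2(2πl)^{-2k} cos(2πlz)`. -/
noncomputable def greenPhi (k : ℕ) (z : ℝ) : ℝ :=
  ∑' l : ℕ, 2 / (2 * Real.pi * (l + 1)) ^ (2 * k) * Real.cos (2 * Real.pi * (l + 1) * z)

section swap

lemma two_pi_succ_pos (l : ℕ) : 0 < 2 * Real.pi * ((l:ℝ) + 1) := by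
  positivity

lemma one_le_two_pi_succ (l : ℕ) : 1 ≤ 2 * Real.pi * ((l:ℝ) + 1) := by
  have h1 : (1:ℝ) ≤ (l:ℝ) + 1 := by have := Nat.cast_nonneg (α := ℝ) l; linarith
  have h2 : (1:ℝ) ≤ 2 * Real.pi := by nlinarith [Real.pi_gt_three]
  nlinarith

lemma summable_coeffs (k : ℕ) (hk : 1 ≤ k) :
    Summable (fun l : ℕ => 2 / (2 * Real.pi * ((l:ℝ) + 1)) ^ (2 * k)) := by
  have base : Summable (fun l : ℕ => 2 / (2 * Real.pi * ((l:ℝ) + 1)) ^ 2) := by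
    have h0 : Summable (fun n : ℕ => 1 / ((n:ℝ)) ^ 2) := by
      simpa using Real.summable_one_div_nat_pow.mpr (le_refl 2)
    have h1 : Summable (fun n : ℕ => 1 / (((n:ℝ)) + 1) ^ 2) := by
      have := (summable_nat_add_iff (f := fun n : ℕ => 1 / ((n:ℝ)) ^ 2) 1).mpr h0
      simpa using this
    have h2 := h1.mul_left (2 / (2 * Real.pi) ^ 2)
    apply h2.congr
    intro l
    have hπ := Real.pi_pos
    field_simp
  apply Summable.of_nonneg_of_le (fun l => by positivity) _ base
  intro l
  apply div_le_div_of_nonneg_left (by norm_num) (by positivity)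
  calc (2 * Real.pi * ((l:ℝ) + 1)) ^ 2 ≤ (2 * Real.pi * ((l:ℝ) + 1)) ^ (2 * k) := by
        apply pow_le_pow_right₀ (one_le_two_pi_succ l) (by omega)
  _ = (2 * Real.pi * ((l:ℝ) + 1)) ^ (2 * k) := rfl

lemma gp_swap_integral (k : ℕ) (hk : 1 ≤ k) {g : ℝ → ℝ} (hgc : Continuous g) :
    (∫ z in (0:ℝ)..1, g z * greenPhi k z)
      = ∑' l : ℕ, 2 / (2 * Real.pi * ((l:ℝ) + 1)) ^ (2 * k)
          * ∫ z in (0:ℝ)..1, g z * Real.cos (2 * Real.pi * ((l:ℝ) + 1) * z) := by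
  set c : ℕ → ℝ := fun l => 2 / (2 * Real.pi * ((l:ℝ) + 1)) ^ (2 * k) with hc
  have hc0 : ∀ l, 0 ≤ c l := fun l => by positivity
  set F : ℕ → ℝ → ℝ := fun l z => g z * (c l * Real.cos (2 * Real.pi * ((l:ℝ) + 1) * z)) with hF
  have hFc : ∀ l, Continuous (F l) := fun l => by
    apply hgc.mul; exact continuous_const.mul (by continuity)
  have hFint : ∀ l, MeasureTheory.IntegrableOn (F l) (Set.Ioc (0:ℝ) 1) :=
    fun l => (hFc l).integrableOn_Ioc
  obtain ⟨M, hM⟩ := isCompact_Icc.exists_bound_of_continuousOn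
    (hgc.continuousOn : ContinuousOn g (Set.Icc (0:ℝ) 1))
  have hM0 : 0 ≤ M := le_trans (norm_nonneg _) (hM 0 (by norm_num))
  have hbound : ∀ l, (∫ a in Set.Ioc (0:ℝ) 1, ‖F l a‖) ≤ M * c l := by
    intro l
    have : ∀ a ∈ Set.Ioc (0:ℝ) 1, ‖F l a‖ ≤ M * c l := by
      intro a ha
      have h1 : ‖g a‖ ≤ M := hM a (Set.mem_Icc_of_Ioc ha)
      have h2 : |Real.cos (2 * Real.pi * ((l:ℝ) + 1) * a)| ≤ 1 := Real.abs_cos_le_one _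
      calc ‖F l a‖ = ‖g a‖ * (c l * |Real.cos (2 * Real.pi * ((l:ℝ) + 1) * a)|) := by
            simp [hF, abs_mul, Real.norm_eq_abs, abs_of_nonneg (hc0 l), mul_assoc]
      _ ≤ M * (c l * 1) := by
            apply mul_le_mul h1 _ (by positivity) hM0
            exact mul_le_mul_of_nonneg_left h2 (hc0 l)
      _ = M * c l := by ring
    calc (∫ a in Set.Ioc (0:ℝ) 1, ‖F l a‖)
        ≤ ∫ _a in Set.Ioc (0:ℝ) 1, M * c l :=
          MeasureTheory.setIntegral_mono_on (hFint l).norm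
            (MeasureTheory.integrableOn_const (by simp))
            measurableSet_Ioc this
    _ = M * c l := by simp [Real.volume_Ioc]
  have hsum : Summable (fun l => ∫ a in Set.Ioc (0:ℝ) 1, ‖F l a‖) := by
    apply Summable.of_nonneg_of_le
      (fun l => MeasureTheory.integral_nonneg (fun a => norm_nonneg _)) hbound
      ((summable_coeffs k hk).mul_left M)
  have hswap := MeasureTheory.integral_tsum_of_summable_integral_norm hFint hsum
  have htsum : ∀ z : ℝ, (∑' l, F l z) = g z * greenPhi k z := by
    intro z
    rw [greenPhi, ← tsum_mul_left]
  rw [intervalIntegral.integral_of_le zero_le_one]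
  have : (∫ z in Set.Ioc (0:ℝ) 1, g z * greenPhi k z)
      = ∫ z in Set.Ioc (0:ℝ) 1, (∑' l, F l z) := by
    apply MeasureTheory.setIntegral_congr_fun measurableSet_Ioc
    intro z _; exact (htsum z).symm
  rw [this, ← hswap]
  apply tsum_congr
  intro l
  rw [intervalIntegral.integral_of_le zero_le_one, ← MeasureTheory.integral_const_mul]
  apply MeasureTheory.setIntegral_congr_fun measurableSet_Ioc
  intro z _; simp [hF]; ring

end swap

section meanzero

lemma cos_two_pi_int (n : ℤ) : Real.cos (2 * Real.pi * (n:ℝ)) = 1 := by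
  have := Real.cos_int_mul_two_pi n
  rw [show (n:ℝ) * (2 * Real.pi) = 2 * Real.pi * (n:ℝ) by ring] at this
  exact this

lemma sin_two_pi_int (n : ℤ) : Real.sin (2 * Real.pi * (n:ℝ)) = 0 := by
  have := Real.sin_int_mul_pi (2 * n)
  rw [show ((2 * n : ℤ):ℝ) * Real.pi = 2 * Real.pi * (n:ℝ) by push_cast; ring] at this
  exact this

lemma integral_cos_zero (c : ℝ) (hc : c ≠ 0) (hs : Real.sin c = 0) :
    (∫ z in (0:ℝ)..1, Real.cos (c * z)) = 0 := by
  have h := intervalIntegral.integral_comp_mul_left (a := (0:ℝ)) (b := 1) Real.cos hc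
  rw [h]
  simp [integral_cos, hs]

lemma greenPhi_mean_zero (k : ℕ) (hk : 1 ≤ k) : (∫ z in (0:ℝ)..1, greenPhi k z) = 0 := by
  have h1 : (∫ z in (0:ℝ)..1, greenPhi k z) = ∫ z in (0:ℝ)..1, (1:ℝ) * greenPhi k z := by
    simp
  rw [h1, gp_swap_integral k hk continuous_const]
  have : ∀ l : ℕ, (2 / (2 * Real.pi * ((l:ℝ) + 1)) ^ (2 * k)
      * ∫ z in (0:ℝ)..1, (1:ℝ) * Real.cos (2 * Real.pi * ((l:ℝ) + 1) * z)) = 0 := by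
    intro l
    have hs : Real.sin (2 * Real.pi * ((l:ℝ) + 1)) = 0 := by
      have := sin_two_pi_int (l + 1)
      push_cast at this
      exact this
    have := integral_cos_zero (2 * Real.pi * ((l:ℝ) + 1)) (two_pi_succ_pos l).ne' hs
    simp only [one_mul]
    rw [this, mul_zero]
  rw [tsum_congr this, tsum_zero]

end meanzero

section fourierpart
open Complex

lemma fourier_hasSum (f : ℝ → ℝ) (hf : ContDiff ℝ (⊤:ℕ∞) f) (hp : Function.Periodic f 1) :
    HasSum (fun l : ℕ => 2 * ∫ z in (0:ℝ)..1, f z * Real.cos (2 * Real.pi * ((l:ℝ)+1) * z))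
      (f 0 - ∫ z in (0:ℝ)..1, f z) := by
  haveI : Fact (0 < (1:ℝ)) := ⟨one_pos⟩
  set Cr : ℝ → ℝ := fun t => ∫ z in (0:ℝ)..1, f z * Real.cos (2 * Real.pi * t * z) with hCr
  set Sr : ℝ → ℝ := fun t => ∫ z in (0:ℝ)..1, f z * Real.sin (2 * Real.pi * t * z) with hSr
  have hfc : Continuous f := hf.continuous
  have hpc : Function.Periodic (fun x : ℝ => (f x : ℂ)) 1 := fun x => by simp [hp x]
  set F : C(AddCircle (1:ℝ), ℂ) :=
    ⟨hpc.lift, continuous_coinduced_dom.mpr (Complex.continuous_ofReal.comp hfc)⟩ with hFdef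
  -- Fourier coefficients in terms of Cr, Sr
  have coeff_eq : ∀ n : ℤ, fourierCoeff (F : AddCircle (1:ℝ) → ℂ) n
      = ((Cr (n:ℝ) : ℝ) : ℂ) - ((Sr (n:ℝ) : ℝ) : ℂ) * Complex.I := by
    intro n
    rw [fourierCoeff_eq_intervalIntegral (F : AddCircle (1:ℝ) → ℂ) n 0]
    have hint : ∀ x : ℝ, (@fourier 1 (-n) (x : AddCircle (1:ℝ))) • (F (x : AddCircle (1:ℝ)))
        = ((f x * Real.cos (2 * Real.pi * (n:ℝ) * x) : ℝ) : ℂ)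
          + ((-(f x * Real.sin (2 * Real.pi * (n:ℝ) * x)) : ℝ) : ℂ) * Complex.I := by
      intro x
      have h1 : (F (x : AddCircle (1:ℝ))) = (f x : ℂ) := by
        simp [hFdef, Function.Periodic.lift_coe]
      rw [h1, fourier_coe_apply, smul_eq_mul]
      have : 2 * ↑π * Complex.I * ↑(-n) * ↑x / ↑(1:ℝ)
          = ((2 * Real.pi * (-(n:ℝ)) * x : ℝ) : ℂ) * Complex.I := by
        push_cast; ring
      rw [this, Complex.exp_mul_I]
      rw [← Complex.ofReal_cos, ← Complex.ofReal_sin]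
      rw [show (2 * Real.pi * (-(n:ℝ)) * x : ℝ) = -(2 * Real.pi * (n:ℝ) * x) by ring]
      rw [Real.cos_neg, Real.sin_neg]
      push_cast
      ring
    simp only [hint]
    rw [intervalIntegral.integral_add, intervalIntegral.integral_mul_const,
      intervalIntegral.integral_ofReal, intervalIntegral.integral_ofReal]
    · rw [intervalIntegral.integral_neg]
      norm_num
      simp only [hCr, hSr]
      ring
    · apply Continuous.intervalIntegrable
      continuity
    · apply Continuous.intervalIntegrable
      exact ((Complex.continuous_ofReal.comp (by continuity)).mul continuous_const)
  -- bound on Fourier coefficients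
  set d2 : ℝ → ℝ := deriv (deriv f) with hd2
  have hd2c : Continuous d2 := (deriv_contDiff_top (deriv_contDiff_top hf)).continuous
  obtain ⟨M0, hM0⟩ := isCompact_Icc.exists_bound_of_continuousOn
    (hd2c.continuousOn : ContinuousOn d2 (Set.Icc (0:ℝ) 1))
  set M : ℝ := max M0 0 with hM
  have hMnn : 0 ≤ M := le_max_right _ _
  have hMb : ∀ x ∈ Set.Icc (0:ℝ) 1, ‖d2 x‖ ≤ M :=
    fun x hx => le_trans (hM0 x hx) (le_max_left _ _)
  have hCb : ∀ n : ℤ, (2 * Real.pi * (n:ℝ))^2 * |Cr (n:ℝ)| ≤ M := by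
    intro n
    have key := ibp2_cos hf hp (cos_two_pi_int n) (sin_two_pi_int n)
    have hb : ‖∫ z in (0:ℝ)..1, d2 z * Real.cos (2 * Real.pi * (n:ℝ) * z)‖ ≤ M * |1 - 0| := by
      apply intervalIntegral.norm_integral_le_of_norm_le_const
      intro x hx
      rw [Set.uIoc_of_le zero_le_one] at hx
      have h1 : ‖d2 x‖ ≤ M := hMb x (Set.mem_Icc_of_Ioc hx)
      calc ‖d2 x * Real.cos (2 * Real.pi * (n:ℝ) * x)‖
          = ‖d2 x‖ * |Real.cos (2 * Real.pi * (n:ℝ) * x)| := by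
            rw [Real.norm_eq_abs, Real.norm_eq_abs, abs_mul]
      _ ≤ M * 1 := mul_le_mul h1 (Real.abs_cos_le_one _) (abs_nonneg _) hMnn
      _ = M := mul_one M
    rw [key] at hb
    rw [Real.norm_eq_abs, abs_mul, abs_neg, _root_.abs_of_nonneg (sq_nonneg _)] at hb
    simp only [hCr]
    simpa using hb
  have hSb : ∀ n : ℤ, (2 * Real.pi * (n:ℝ))^2 * |Sr (n:ℝ)| ≤ M := by
    intro n
    have key := ibp2_sin hf hp (cos_two_pi_int n) (sin_two_pi_int n)
    have hb : ‖∫ z in (0:ℝ)..1, d2 z * Real.sin (2 * Real.pi * (n:ℝ) * z)‖ ≤ M * |1 - 0| := by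
      apply intervalIntegral.norm_integral_le_of_norm_le_const
      intro x hx
      rw [Set.uIoc_of_le zero_le_one] at hx
      have h1 : ‖d2 x‖ ≤ M := hMb x (Set.mem_Icc_of_Ioc hx)
      calc ‖d2 x * Real.sin (2 * Real.pi * (n:ℝ) * x)‖
          = ‖d2 x‖ * |Real.sin (2 * Real.pi * (n:ℝ) * x)| := by
            rw [Real.norm_eq_abs, Real.norm_eq_abs, abs_mul]
      _ ≤ M * 1 := mul_le_mul h1 (Real.abs_sin_le_one _) (abs_nonneg _) hMnn
      _ = M := mul_one M
    rw [key] at hb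
    rw [Real.norm_eq_abs, abs_mul, abs_neg, _root_.abs_of_nonneg (sq_nonneg _)] at hb
    simp only [hSr]
    simpa using hb
  have hcoeffb : ∀ n : ℤ, n ≠ 0 → ‖fourierCoeff (F : AddCircle (1:ℝ) → ℂ) n‖
      ≤ 2 * M / (2 * Real.pi * (n:ℝ))^2 := by
    intro n hn
    have hpos : (0:ℝ) < (2 * Real.pi * (n:ℝ))^2 := by
      have : (n:ℝ) ≠ 0 := Int.cast_ne_zero.mpr hn
      positivity
    rw [coeff_eq n]
    calc ‖((Cr (n:ℝ) : ℝ) : ℂ) - ((Sr (n:ℝ) : ℝ) : ℂ) * Complex.I‖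
        ≤ ‖((Cr (n:ℝ) : ℝ) : ℂ)‖ + ‖((Sr (n:ℝ) : ℝ) : ℂ) * Complex.I‖ := norm_sub_le _ _
    _ = |Cr (n:ℝ)| + |Sr (n:ℝ)| := by
        rw [norm_mul, Complex.norm_I, mul_one, Complex.norm_real, Complex.norm_real,
          Real.norm_eq_abs, Real.norm_eq_abs]
    _ ≤ M / (2 * Real.pi * (n:ℝ))^2 + M / (2 * Real.pi * (n:ℝ))^2 := by
        apply add_le_add
        · rw [le_div_iff₀ hpos, mul_comm]; exact hCb n
        · rw [le_div_iff₀ hpos, mul_comm]; exact hSb n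
    _ = 2 * M / (2 * Real.pi * (n:ℝ))^2 := by ring
  -- summability
  have hsumaux : Summable (fun l : ℕ => 2 * M / (2 * Real.pi * ((l:ℝ)+1))^2) := by
    have := (summable_coeffs 1 le_rfl).mul_left M
    apply this.congr
    intro l
    norm_num
    ring
  have S1 : Summable (fun n : ℕ => fourierCoeff (F : AddCircle (1:ℝ) → ℂ) n) := by
    apply (summable_nat_add_iff 1).mp
    apply Summable.of_norm
    apply Summable.of_nonneg_of_le (fun l => norm_nonneg _) _ hsumaux
    intro l
    have := hcoeffb ((l:ℤ)+1) (by omega)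
    rw [show (((l:ℤ)+1 : ℤ):ℝ) = (l:ℝ)+1 by push_cast; ring] at this
    exact_mod_cast this
  have S2 : Summable (fun n : ℕ => fourierCoeff (F : AddCircle (1:ℝ) → ℂ) (-(n+1))) := by
    apply Summable.of_norm
    apply Summable.of_nonneg_of_le (fun l => norm_nonneg _) _ hsumaux
    intro l
    have := hcoeffb (-((l:ℤ)+1)) (by omega)
    rw [show ((-((l:ℤ)+1) : ℤ):ℝ) = -((l:ℝ)+1) by push_cast; ring] at this
    rw [show (2 * Real.pi * (-((l:ℝ)+1)))^2 = (2 * Real.pi * ((l:ℝ)+1))^2 by ring] at this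
    exact this
  have hsum : Summable (fourierCoeff (F : AddCircle (1:ℝ) → ℂ)) :=
    Summable.of_nat_of_neg_add_one S1 S2
  -- pointwise convergence at 0
  have h0 := has_pointwise_sum_fourier_series_of_summable hsum (0 : AddCircle (1:ℝ))
  have hF0 : F (0 : AddCircle (1:ℝ)) = ((f 0 : ℝ) : ℂ) := by
    have h00 : ((0:ℝ) : AddCircle (1:ℝ)) = 0 := by norm_num
    rw [← h00]
    exact hpc.lift_coe 0
  have h0' : HasSum (fun i : ℤ => fourierCoeff (F : AddCircle (1:ℝ) → ℂ) i) ((f 0 : ℝ) : ℂ) := by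
    rw [← hF0]
    have : ∀ i : ℤ, fourierCoeff (F : AddCircle (1:ℝ) → ℂ) i • fourier i (0 : AddCircle (1:ℝ))
        = fourierCoeff (F : AddCircle (1:ℝ) → ℂ) i := by
      intro i
      rw [fourier_eval_zero, smul_eq_mul, mul_one]
    simpa only [this] using h0
  -- pairing n and -n
  have h1 := h0'.nat_add_neg
  have hCeven : ∀ n : ℤ, Cr ((-n : ℤ):ℝ) = Cr (n:ℝ) := by
    intro n
    have : ∀ z : ℝ, f z * Real.cos (2 * Real.pi * ((-n : ℤ):ℝ) * z)
        = f z * Real.cos (2 * Real.pi * (n:ℝ) * z) := by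
      intro z
      rw [show (2 * Real.pi * ((-n : ℤ):ℝ) * z) = -(2 * Real.pi * (n:ℝ) * z) by push_cast; ring,
        Real.cos_neg]
    simp only [hCr, this]
  have hSodd : ∀ n : ℤ, Sr ((-n : ℤ):ℝ) = -Sr (n:ℝ) := by
    intro n
    have : ∀ z : ℝ, f z * Real.sin (2 * Real.pi * ((-n : ℤ):ℝ) * z)
        = -(f z * Real.sin (2 * Real.pi * (n:ℝ) * z)) := by
      intro z
      rw [show (2 * Real.pi * ((-n : ℤ):ℝ) * z) = -(2 * Real.pi * (n:ℝ) * z) by push_cast; ring,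
        Real.sin_neg]
      ring
    simp only [hSr, this, intervalIntegral.integral_neg]
  have h2 : (fun n : ℕ => fourierCoeff (F : AddCircle (1:ℝ) → ℂ) n
        + fourierCoeff (F : AddCircle (1:ℝ) → ℂ) (-n))
      = fun n : ℕ => ((2 * Cr ((n:ℤ):ℝ) : ℝ) : ℂ) := by
    funext n
    rw [coeff_eq, coeff_eq, show ((-(n:ℤ) : ℤ):ℝ) = ((-(n:ℤ):ℤ):ℝ) from rfl, hCeven, hSodd]
    push_cast
    ring
  rw [h2] at h1
  -- identify coeff 0 and Cr 0
  have hS0 : Sr ((0:ℤ):ℝ) = 0 := by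
    have : ∀ z : ℝ, f z * Real.sin (2 * Real.pi * ((0:ℤ):ℝ) * z) = 0 := by
      intro z; norm_num
    simp only [hSr, this, intervalIntegral.integral_zero]
  have hcoeff0 : fourierCoeff (F : AddCircle (1:ℝ) → ℂ) 0 = ((Cr ((0:ℤ):ℝ) : ℝ) : ℂ) := by
    rw [coeff_eq 0, hS0]
    norm_num
  rw [hcoeff0] at h1
  -- shift index by 1
  have h4 : HasSum (fun l : ℕ => ((2 * Cr (((l+1 : ℕ):ℤ):ℝ) : ℝ) : ℂ))
      ((((f 0 : ℝ):ℂ) + ((Cr ((0:ℤ):ℝ) : ℝ):ℂ)) - ((2 * Cr ((0:ℤ):ℝ) : ℝ):ℂ)) := by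
    apply (hasSum_nat_add_iff (f := fun n : ℕ => ((2 * Cr ((n:ℤ):ℝ) : ℝ) : ℂ)) 1).mpr
    convert h1 using 1
    · rfl
    simp only [Finset.range_one, Finset.sum_singleton]
    push_cast
    ring
  have hC0 : Cr ((0:ℤ):ℝ) = ∫ z in (0:ℝ)..1, f z := by
    have : ∀ z : ℝ, f z * Real.cos (2 * Real.pi * ((0:ℤ):ℝ) * z) = f z := by
      intro z; norm_num
    simp only [hCr, this]
  -- conclude
  have h5 : HasSum (fun l : ℕ => ((2 * Cr ((l:ℝ)+1) : ℝ) : ℂ))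
      (((f 0 - ∫ z in (0:ℝ)..1, f z : ℝ)) : ℂ) := by
    have he : (fun l : ℕ => ((2 * Cr (((l+1 : ℕ):ℤ):ℝ) : ℝ) : ℂ))
        = fun l : ℕ => ((2 * Cr ((l:ℝ)+1) : ℝ) : ℂ) := by
      funext l
      norm_num
    rw [he] at h4
    convert h4 using 1
    rw [hC0]
    push_cast
    ring
  have := hasSum_ofReal.mp h5
  exact this

end fourierpart

/-- `φ` has zero mean, and `(−1)^k Δ^k φ = δ_0 − 1` distributionally: for every
smooth 1-periodic test function `f`,
`(−1)^k ∫_0^1 f^{(2k)}(z) φ(z) dz = f(0) − ∫_0^1 f(z) dz`. -/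
theorem greenPhi_mean_zero_and_delta (k : ℕ) (hk : 1 ≤ k) :
    (∫ z in (0:ℝ)..1, greenPhi k z) = 0 ∧
    ∀ f : ℝ → ℝ, ContDiff ℝ (⊤ : ℕ∞) f → Function.Periodic f 1 →
      (-1 : ℝ) ^ k * ∫ z in (0:ℝ)..1, iteratedDeriv (2 * k) f z * greenPhi k z
        = f 0 - ∫ z in (0:ℝ)..1, f z := by
  constructor
  · exact greenPhi_mean_zero k hk
  · intro f hf hp
    have hf' : ContDiff ℝ ((⊤:ℕ∞) : WithTop ℕ∞) f := hf.of_le (by simp)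
    have hcont : Continuous (iteratedDeriv (2*k) f) := by
      rw [iteratedDeriv_eq_iterate]
      exact (ContDiff.iterate_deriv (2*k) hf').continuous
    rw [gp_swap_integral k hk hcont]
    have hterm : ∀ l : ℕ,
        (2 / (2 * Real.pi * ((l:ℝ)+1)) ^ (2*k)
          * ∫ z in (0:ℝ)..1, iteratedDeriv (2*k) f z * Real.cos (2 * Real.pi * ((l:ℝ)+1) * z))
        = (-1:ℝ)^k * (2 * ∫ z in (0:ℝ)..1, f z * Real.cos (2 * Real.pi * ((l:ℝ)+1) * z)) := by
      intro l
      have hc1 : Real.cos (2 * Real.pi * ((l:ℝ)+1)) = 1 := by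
        have := cos_two_pi_int ((l:ℤ)+1)
        push_cast at this
        exact this
      have hc2 : Real.sin (2 * Real.pi * ((l:ℝ)+1)) = 0 := by
        have := sin_two_pi_int ((l:ℤ)+1)
        push_cast at this
        exact this
      rw [iter_cos hc1 hc2 k f hf' hp]
      have hne : (2 * Real.pi * ((l:ℝ)+1)) ^ (2*k) ≠ 0 :=
        pow_ne_zero _ (two_pi_succ_pos l).ne'
      field_simp
    rw [tsum_congr hterm, tsum_mul_left, ← mul_assoc,
      show (-1:ℝ)^k * (-1)^k = 1 by rw [← pow_add]; exact Even.neg_one_pow ⟨k, rfl⟩, one_mul]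
    exact (fourier_hasSum f hf' hp).tsum_eq
end
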